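/- Let c ≥ 1 be an integer and consider an instance of the Second-Price Ad Auctions problem with m keywords in which every bid b_{u,v} satisfies b_{u,v} ≤ B_v/c. The algorithm that selects the c keywords u with the largest second-highest bids s_u and allocates each of them to its top two bidders achieves profit at least (c/m)·Σ_{u} s_u, and since the optimum is at most Σ_u s_u, this is an (m/c)-approximation. -/

import Mathlib

/-- Remaining budgets in the Second-Price Ad Auctions problem after the first `t`
keywords have been processed: when keyword `t` is allocated to first-price bidder
`v₁` with second-price bidder `v₂`, bidder `v₁` pays `v₂`'s effective bid
`min (b t v₂) (budget of v₂)`. -/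
def paaBud {V : Type*} [DecidableEq V] (B : V → ℝ) (b : ℕ → V → ℝ)
    (alloc : ℕ → Option (V × V)) : ℕ → V → ℝ
  | 0 => B
  | t + 1 => fun v =>
    match alloc t with
    | none => paaBud B b alloc t v
    | some (v1, v2) =>
      if v = v1 then paaBud B b alloc t v - min (b t v2) (paaBud B b alloc t v2)
      else paaBud B b alloc t v

/-- The price charged for keyword `t`: the effective bid of its second-price bidder. -/
def paaPrice {V : Type*} [DecidableEq V] (B : V → ℝ) (b : ℕ → V → ℝ)
    (alloc : ℕ → Option (V × V)) (t : ℕ) : ℝ :=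
  match alloc t with
  | none => 0
  | some (_, v2) => min (b t v2) (paaBud B b alloc t v2)

/-- Feasibility of a 2PAA allocation of `m` keywords: only the `m` keywords are
allocated, the two selected bidders are distinct, and the first-price bidder's
effective bid is at least the second-price bidder's effective bid. -/
def paaFeasible {V : Type*} [DecidableEq V] (m : ℕ) (B : V → ℝ) (b : ℕ → V → ℝ)
    (alloc : ℕ → Option (V × V)) : Prop :=
  (∀ t, m ≤ t → alloc t = none) ∧
  ∀ t < m, ∀ v1 v2, alloc t = some (v1, v2) →
    v1 ≠ v2 ∧
      min (b t v2) (paaBud B b alloc t v2) ≤ min (b t v1) (paaBud B b alloc t v1)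

/-- The total profit of a 2PAA allocation. -/
def paaProfit {V : Type*} [DecidableEq V] (m : ℕ) (B : V → ℝ) (b : ℕ → V → ℝ)
    (alloc : ℕ → Option (V × V)) : ℝ :=
  ∑ t ∈ Finset.range m, paaPrice B b alloc t

/-!
Give each of the `c` keywords with the largest second-highest bids `s_u` to its top two bidders.
Before a selected keyword, a bidder has paid for at most `c - 1` selected keywords, each time at
most its own bid `≤ B_v / c`; so its budget is still at least `B_v / c`, effective bids equal the
original bids, and each selected keyword earns exactly `s_u`. The `c` largest values `s_u` carry
at least a `c / m` share of `∑ s_u`. Conversely, a feasible allocation earns at most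
`min (b u v₁) (b u v₂) ≤ s_u` on keyword `u`.
-/

open Finset

section TopElements

variable {α β : Type*} [DecidableEq α]

theorem Finset.exists_subset_card_eq_forall_le [LinearOrder β] (f : α → β) {c : ℕ}
    {A : Finset α} (hc : c ≤ #A) :
    ∃ T ⊆ A, #T = c ∧ ∀ t ∈ T, ∀ u ∈ A \ T, f u ≤ f t := by
  induction c generalizing A with
  | zero => exact ⟨∅, empty_subset _, card_empty, by simp⟩
  | succ c ih =>
    obtain ⟨a, ha, hmax⟩ := A.exists_max_image f (card_pos.mp (by omega))
    obtain ⟨T, hTA, hTc, htop⟩ := ih (A := A.erase a) (by rw [card_erase_of_mem ha]; omega)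
    have haT : a ∉ T := fun h => (mem_erase.mp (hTA h)).1 rfl
    refine ⟨insert a T, insert_subset ha ((hTA.trans (erase_subset _ _))),
      by rw [card_insert_of_notMem haT, hTc], ?_⟩
    intro t ht u hu
    obtain ⟨huA, huT⟩ := mem_sdiff.mp hu
    rcases mem_insert.mp ht with rfl | ht
    · exact hmax u huA
    · exact htop t ht u (mem_sdiff.mpr
        ⟨mem_erase.mpr ⟨fun h => huT (h ▸ mem_insert_self _ _), huA⟩,
          fun h => huT (mem_insert_of_mem h)⟩)

theorem Finset.card_div_card_mul_sum_le_sum {A T : Finset α} {f : α → ℝ} (hTA : T ⊆ A)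
    (htop : ∀ t ∈ T, ∀ u ∈ A \ T, f u ≤ f t) :
    (#T / #A : ℝ) * ∑ a ∈ A, f a ≤ ∑ t ∈ T, f t := by
  rcases A.eq_empty_or_nonempty with rfl | hA
  · simp [subset_empty.mp hTA]
  have hApos : (0 : ℝ) < #A := by exact_mod_cast hA.card_pos
  have houtside : (#T : ℝ) * ∑ u ∈ A \ T, f u ≤ #(A \ T) * ∑ t ∈ T, f t :=
    calc (#T : ℝ) * ∑ u ∈ A \ T, f u = ∑ u ∈ A \ T, ∑ _t ∈ T, f u := by
          simp [mul_sum]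
      _ ≤ ∑ u ∈ A \ T, ∑ t ∈ T, f t :=
          sum_le_sum fun u hu => sum_le_sum fun t ht => htop t ht u hu
      _ = #(A \ T) * ∑ t ∈ T, f t := by simp
  have hcard : (#(A \ T) : ℝ) + #T = #A := by exact_mod_cast card_sdiff_add_card_eq_card hTA
  rw [div_mul_eq_mul_div, div_le_iff₀ hApos, ← sum_sdiff hTA, ← hcard]
  linarith

end TopElements

section Budgets

variable {V : Type*} [DecidableEq V] (B : V → ℝ) (b : ℕ → V → ℝ) (alloc : ℕ → Option (V × V))

def paaPayment (t : ℕ) (v : V) : ℝ :=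
  if (alloc t).map Prod.fst = some v then paaPrice B b alloc t else 0

theorem paaBud_succ (t : ℕ) (v : V) :
    paaBud B b alloc (t + 1) v = paaBud B b alloc t v - paaPayment B b alloc t v := by
  rcases h : alloc t with _ | ⟨v1, v2⟩
  · simp [paaBud, paaPayment, h]
  · by_cases hv : v = v1 <;> simp [paaBud, paaPayment, paaPrice, h, hv, eq_comm]

theorem paaBud_eq_sub_sum (t : ℕ) (v : V) :
    paaBud B b alloc t v = B v - ∑ u ∈ range t, paaPayment B b alloc u v := by
  induction t with
  | zero => simp [paaBud]
  | succ t ih => rw [paaBud_succ, ih, sum_range_succ]; ring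

end Budgets

theorem exists_ordered_pair_of_eq_min {V : Type*} {w : V → ℝ} {x : ℝ}
    (hx : ∃ v1 v2 : V, v1 ≠ v2 ∧ x = min (w v1) (w v2)) :
    ∃ q : V × V, q.1 ≠ q.2 ∧ w q.2 ≤ w q.1 ∧ x = w q.2 := by
  obtain ⟨v1, v2, hne, rfl⟩ := hx
  rcases le_total (w v2) (w v1) with h | h
  · exact ⟨(v1, v2), hne, h, min_eq_right h⟩
  · exact ⟨(v2, v1), hne.symm, h, min_eq_left h⟩

section TopTwoAllocation

variable {V : Type*} [DecidableEq V] {B : V → ℝ} {b : ℕ → V → ℝ} {T : Finset ℕ}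
  {p : ℕ → V × V}

def topTwoAlloc (T : Finset ℕ) (p : ℕ → V × V) : ℕ → Option (V × V) :=
  fun t => if t ∈ T then some (p t) else none

theorem paaPayment_topTwoAlloc_of_notMem {u : ℕ} (hu : u ∉ T) (v : V) :
    paaPayment B b (topTwoAlloc T p) u v = 0 := by
  simp [paaPayment, topTwoAlloc, hu]

theorem paaPayment_topTwoAlloc_le (hb0 : ∀ t v, 0 ≤ b t v)
    (hbB : ∀ t ∈ T, ∀ v, b t v ≤ B v / #T) (hle : ∀ t ∈ T, b t (p t).2 ≤ b t (p t).1)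
    {u : ℕ} (hu : u ∈ T) (v : V) :
    paaPayment B b (topTwoAlloc T p) u v ≤ B v / #T := by
  unfold paaPayment
  split_ifs with hpay
  · simp only [topTwoAlloc, if_pos hu, Option.map_some, Option.some.injEq] at hpay
    simp only [paaPrice, topTwoAlloc, if_pos hu]
    calc min (b u (p u).2) _ ≤ b u (p u).2 := min_le_left _ _
      _ ≤ b u v := hpay ▸ hle u hu
      _ ≤ B v / #T := hbB u hu v
  · exact (hb0 u v).trans (hbB u hu v)

theorem div_card_le_paaBud_topTwoAlloc (hb0 : ∀ t v, 0 ≤ b t v)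
    (hbB : ∀ t ∈ T, ∀ v, b t v ≤ B v / #T) (hle : ∀ t ∈ T, b t (p t).2 ≤ b t (p t).1)
    {t : ℕ} (ht : t ∈ T) (v : V) :
    B v / #T ≤ paaBud B b (topTwoAlloc T p) t v := by
  set S := T.filter (· < t)
  have hSt : S ⊆ range t := fun u hu => mem_range.mpr (mem_filter.mp hu).2
  have hS : #S ≤ #T - 1 := by
    rw [← card_erase_of_mem ht]
    exact card_le_card fun u hu => mem_erase.mpr ⟨(mem_filter.mp hu).2.ne, (mem_filter.mp hu).1⟩
  have hpaid : ∑ u ∈ range t, paaPayment B b (topTwoAlloc T p) u v ≤ #S * (B v / #T) :=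
    calc ∑ u ∈ range t, paaPayment B b (topTwoAlloc T p) u v
        = ∑ u ∈ S, paaPayment B b (topTwoAlloc T p) u v := by
          refine (sum_subset hSt fun u hu huS => paaPayment_topTwoAlloc_of_notMem ?_ v).symm
          exact fun huT => huS (mem_filter.mpr ⟨huT, mem_range.mp hu⟩)
      _ ≤ ∑ _u ∈ S, B v / #T :=
          sum_le_sum fun u hu => paaPayment_topTwoAlloc_le hb0 hbB hle (mem_filter.mp hu).1 v
      _ = #S * (B v / #T) := by simp
  have hTpos : 0 < #T := card_pos.mpr ⟨t, ht⟩
  have hSR : (#S : ℝ) ≤ #T - 1 := by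
    rw [← Nat.cast_one, ← Nat.cast_sub hTpos]; exact_mod_cast hS
  have hβ : 0 ≤ B v / #T := (hb0 t v).trans (hbB t ht v)
  have hBv : (#T : ℝ) * (B v / #T) = B v := mul_div_cancel₀ _ (by positivity)
  rw [paaBud_eq_sub_sum]
  nlinarith

theorem min_paaBud_topTwoAlloc (hb0 : ∀ t v, 0 ≤ b t v)
    (hbB : ∀ t ∈ T, ∀ v, b t v ≤ B v / #T) (hle : ∀ t ∈ T, b t (p t).2 ≤ b t (p t).1)
    {t : ℕ} (ht : t ∈ T) (v : V) :
    min (b t v) (paaBud B b (topTwoAlloc T p) t v) = b t v :=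
  min_eq_left ((hbB t ht v).trans (div_card_le_paaBud_topTwoAlloc hb0 hbB hle ht v))

theorem paaFeasible_topTwoAlloc {m : ℕ} (hb0 : ∀ t v, 0 ≤ b t v)
    (hbB : ∀ t ∈ T, ∀ v, b t v ≤ B v / #T) (hne : ∀ t ∈ T, (p t).1 ≠ (p t).2)
    (hle : ∀ t ∈ T, b t (p t).2 ≤ b t (p t).1) (hTm : ∀ t ∈ T, t < m) :
    paaFeasible m B b (topTwoAlloc T p) := by
  refine ⟨fun t hmt => if_neg fun ht => (hTm t ht).not_ge hmt, fun t _ v1 v2 h => ?_⟩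
  have ht : t ∈ T := by
    by_contra ht
    simp [topTwoAlloc, ht] at h
  simp only [topTwoAlloc, if_pos ht, Option.some.injEq] at h
  rw [min_paaBud_topTwoAlloc hb0 hbB hle ht, min_paaBud_topTwoAlloc hb0 hbB hle ht]
  simpa [h] using And.intro (hne t ht) (hle t ht)

theorem paaProfit_topTwoAlloc {m : ℕ} (hb0 : ∀ t v, 0 ≤ b t v)
    (hbB : ∀ t ∈ T, ∀ v, b t v ≤ B v / #T) (hle : ∀ t ∈ T, b t (p t).2 ≤ b t (p t).1)
    (hTm : T ⊆ range m) :
    paaProfit m B b (topTwoAlloc T p) = ∑ t ∈ T, b t (p t).2 := by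
  rw [paaProfit, ← sum_subset hTm fun t _ ht => by simp [paaPrice, topTwoAlloc, ht]]
  refine sum_congr rfl fun t ht => ?_
  simp only [paaPrice, topTwoAlloc, if_pos ht]
  exact min_paaBud_topTwoAlloc hb0 hbB hle ht _

end TopTwoAllocation

section UpperBound

variable {V : Type*} [DecidableEq V] {B : V → ℝ} {b : ℕ → V → ℝ} {s : ℕ → ℝ}

theorem paaPrice_le_of_isGreatest {m t : ℕ} {alloc : ℕ → Option (V × V)} {x : ℝ}
    (hfeas : paaFeasible m B b alloc) (ht : t < m) (hb0 : ∀ v, 0 ≤ b t v)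
    (hx : IsGreatest {x | ∃ v1 v2 : V, v1 ≠ v2 ∧ x = min (b t v1) (b t v2)} x) :
    paaPrice B b alloc t ≤ x := by
  unfold paaPrice
  rcases h : alloc t with _ | ⟨v1, v2⟩
  · obtain ⟨v1, v2, -, rfl⟩ := hx.1
    exact le_min (hb0 v1) (hb0 v2)
  · obtain ⟨hne, hle⟩ := hfeas.2 t ht v1 v2 h
    calc min (b t v2) (paaBud B b alloc t v2) ≤ min (b t v1) (b t v2) :=
          le_min (hle.trans (min_le_left _ _)) (min_le_left _ _)
      _ ≤ x := hx.2 ⟨v1, v2, hne, rfl⟩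

theorem paaProfit_le_sum_of_isGreatest {m : ℕ} {alloc : ℕ → Option (V × V)}
    (hfeas : paaFeasible m B b alloc) (hb0 : ∀ t v, 0 ≤ b t v)
    (hs : ∀ t < m, IsGreatest {x | ∃ v1 v2 : V, v1 ≠ v2 ∧ x = min (b t v1) (b t v2)} (s t)) :
    paaProfit m B b alloc ≤ ∑ t ∈ range m, s t :=
  sum_le_sum fun t ht =>
    paaPrice_le_of_isGreatest hfeas (mem_range.mp ht) (hb0 t) (hs t (mem_range.mp ht))

end UpperBound

theorem paa_trivial_approx_general {V : Type*} [DecidableEq V]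
    (m c : ℕ) (hc : 1 ≤ c) (hcm : c ≤ m)
    (B : V → ℝ) (b : ℕ → V → ℝ)
    (hb0 : ∀ t v, 0 ≤ b t v)
    (hbB : ∀ t < m, ∀ v, b t v ≤ B v / c)
    (s : ℕ → ℝ)
    (hs : ∀ t < m, IsGreatest
      {x | ∃ v1 v2 : V, v1 ≠ v2 ∧ x = min (b t v1) (b t v2)} (s t)) :
    (∃ alloc, paaFeasible m B b alloc ∧
        ((c : ℝ) / m) * ∑ t ∈ Finset.range m, s t ≤ paaProfit m B b alloc) ∧
    (∀ alloc, paaFeasible m B b alloc →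
        paaProfit m B b alloc ≤ ∑ t ∈ Finset.range m, s t) := by
  refine ⟨?_, fun alloc hfeas => paaProfit_le_sum_of_isGreatest hfeas hb0 hs⟩
  obtain ⟨T, hTrange, hTc, htop⟩ :=
    exists_subset_card_eq_forall_le s (A := range m) (by simpa using hcm)
  have hTm : ∀ t ∈ T, t < m := fun t ht => mem_range.mp (hTrange ht)
  obtain ⟨v0, -⟩ := (hs 0 (by omega)).1
  have : Nonempty V := ⟨v0⟩
  choose! p hne hle hsp using fun t (ht : t ∈ T) =>
    exists_ordered_pair_of_eq_min (hs t (hTm t ht)).1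
  have hbT : ∀ t ∈ T, ∀ v, b t v ≤ B v / #T := fun t ht v => hTc ▸ hbB t (hTm t ht) v
  refine ⟨topTwoAlloc T p, paaFeasible_topTwoAlloc hb0 hbT hne hle hTm, ?_⟩
  rw [paaProfit_topTwoAlloc hb0 hbT hle hTrange, ← sum_congr rfl hsp]
  simpa [hTc] using card_div_card_mul_sum_le_sum hTrange htop

/-- in a 2PAA instance with `m` keywords in which every bid satisfies
`b_{u,v} ≤ B_v / c`, the algorithm allocating each of the `c` keywords with the
largest second-highest bids `s_u` to its top two bidders achieves profit at least
`(c/m) ∑_u s_u`; moreover every feasible solution has profit at most `∑_u s_u`, so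
this is an `m/c`-approximation. (`s t` is the second-highest bid on keyword `t`,
i.e. the largest value of `min (b t v₁) (b t v₂)` over pairs of distinct bidders.) -/
theorem paa_trivial_approx {V : Type*} [Fintype V] [DecidableEq V]
    (m c : ℕ) (hc : 1 ≤ c) (hcm : c ≤ m)
    (B : V → ℝ) (b : ℕ → V → ℝ)
    (hb0 : ∀ t v, 0 ≤ b t v)
    (hbB : ∀ t < m, ∀ v, b t v ≤ B v / c)
    (s : ℕ → ℝ)
    (hs : ∀ t < m, IsGreatest
      {x | ∃ v1 v2 : V, v1 ≠ v2 ∧ x = min (b t v1) (b t v2)} (s t)) :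
    (∃ alloc, paaFeasible m B b alloc ∧
        ((c : ℝ) / m) * ∑ t ∈ Finset.range m, s t ≤ paaProfit m B b alloc) ∧
    (∀ alloc, paaFeasible m B b alloc →
        paaProfit m B b alloc ≤ ∑ t ∈ Finset.range m, s t) :=
  paa_trivial_approx_general m c hc hcm B b hb0 hbB s hs
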